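/- Let f be a tempered distribution on ℝ^d whose grand maximal function M_{𝓕_N}(f) belongs to (L^q, ℓ^p) for some 0 < q, p < ∞ and N ∈ ℕ. Then f is a bounded distribution: for every Φ ∈ 𝒮(ℝ^d), the function f ∗ Φ is bounded, with sup_x |(f ∗ Φ)(x)| ≤ C(d,q,p)·𝔑_N(Φ)·‖M_{𝓕_N}(f)‖_{q,p}. -/

import Mathlib

open MeasureTheory Metric Set Filter
open scoped ENNReal NNReal

noncomputable section

/-- The unit cube `Q_k = k + [0,1)^d` in `ℝ^d`. -/
def unitCube (d : ℕ) (k : Fin d → ℤ) : Set (Fin d → ℝ) :=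
  {x | ∀ i, (k i : ℝ) ≤ x i ∧ x i < (k i : ℝ) + 1}

/-- The `ℓ^p` norm over `ℤ^d` of an `ℝ≥0∞`-valued sequence. -/
def ellNorm (d : ℕ) (p : ℝ≥0∞) (a : (Fin d → ℤ) → ℝ≥0∞) : ℝ≥0∞ :=
  if p = ∞ then ⨆ k, a k else (∑' k, a k ^ p.toReal) ^ (1 / p.toReal)

/-- The `L^q` norm of an `ℝ≥0∞`-valued function on a set `s ⊆ ℝ^d`. -/
def setLqNorm {d : ℕ} (q : ℝ≥0∞) (g : (Fin d → ℝ) → ℝ≥0∞) (s : Set (Fin d → ℝ)) : ℝ≥0∞ :=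
  if q = ∞ then essSup g (volume.restrict s)
  else (∫⁻ x in s, g x ^ q.toReal) ^ (1 / q.toReal)

/-- The Wiener amalgam quasi-norm of an `ℝ≥0∞`-valued function:
`ℓ^p` (over `ℤ^d`) of the `L^q` norms over the unit cubes `Q_k`. -/
def amalgamNormE (d : ℕ) (q p : ℝ≥0∞) (g : (Fin d → ℝ) → ℝ≥0∞) : ℝ≥0∞ :=
  ellNorm d p fun k => setLqNorm q g (unitCube d k)

/-- The Wiener amalgam quasi-norm `‖f‖_{q,p}` of `f : ℝ^d → ℂ`. -/
def amalgamNorm (d : ℕ) (q p : ℝ≥0∞) (f : (Fin d → ℝ) → ℂ) : ℝ≥0∞ :=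
  amalgamNormE d q p fun x => (‖f x‖₊ : ℝ≥0∞)

section ShiftDilate

variable {D : Type*} [NormedAddCommGroup D] [NormedSpace ℝ D]

lemma affine_hasFDerivAt (b : D) (s : ℝ) (y : D) :
    HasFDerivAt (fun y : D => b + s • y) (s • ContinuousLinearMap.id ℝ D) y := by
  have h : HasFDerivAt (fun y : D => s • y) (s • ContinuousLinearMap.id ℝ D) y :=
    (hasFDerivAt_id y).const_smul s
  exact h.const_add b

lemma affine_hasTemperateGrowth (b : D) (s : ℝ) :
    Function.HasTemperateGrowth (fun y : D => b + s • y) := by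
  apply Function.HasTemperateGrowth.of_fderiv (k := 1) (C := ‖b‖ + |s|)
  · have h : (fderiv ℝ fun y : D => b + s • y) = fun _ => s • ContinuousLinearMap.id ℝ D :=
      funext fun y => (affine_hasFDerivAt b s y).fderiv
    rw [h]
    exact Function.HasTemperateGrowth.const _
  · exact fun y => (affine_hasFDerivAt b s y).differentiableAt
  · intro y
    have h1 : ‖b + s • y‖ ≤ ‖b‖ + |s| * ‖y‖ := by
      refine (norm_add_le _ _).trans ?_
      rw [norm_smul, Real.norm_eq_abs]
    have h2 : (0:ℝ) ≤ |s| := abs_nonneg s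
    have h3 : (0:ℝ) ≤ ‖y‖ := norm_nonneg y
    have h4 : (0:ℝ) ≤ ‖b‖ := norm_nonneg b
    calc ‖b + s • y‖ ≤ ‖b‖ + |s| * ‖y‖ := h1
      _ ≤ (‖b‖ + |s|) * (1 + ‖y‖) ^ 1 := by nlinarith

lemma affine_antilipschitz (b : D) {s : ℝ} (hs : s ≠ 0) :
    AntilipschitzWith (‖s‖₊⁻¹) (fun y : D => b + s • y) := by
  refine antilipschitzWith_iff_le_mul_dist.2 fun x y => ?_
  have h : dist (b + s • x) (b + s • y) = |s| * dist x y := by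
    rw [dist_add_left, dist_smul₀, Real.norm_eq_abs]
  rw [h]
  have hco : ((‖s‖₊⁻¹ : ℝ≥0) : ℝ) = |s|⁻¹ := by
    rw [NNReal.coe_inv, coe_nnnorm, Real.norm_eq_abs]
  rw [hco, ← mul_assoc, inv_mul_cancel₀ (abs_ne_zero.2 hs), one_mul]

end ShiftDilate

/-- The Schwartz function `y ↦ t^{-d} φ(t⁻¹ • (x - y))`, i.e. `y ↦ φ_t(x - y)`
(defined to be `0` for `t = 0`). -/
def shiftDilate (d : ℕ) (φ : SchwartzMap (Fin d → ℝ) ℂ) (x : Fin d → ℝ) (t : ℝ) :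
    SchwartzMap (Fin d → ℝ) ℂ :=
  if ht : t = 0 then 0
  else ((t ^ d : ℝ))⁻¹ • SchwartzMap.compCLMOfAntilipschitz (𝕜 := ℝ)
    (affine_hasTemperateGrowth (t⁻¹ • x) (-t⁻¹))
    (affine_antilipschitz (t⁻¹ • x) (neg_ne_zero.2 (inv_ne_zero ht))) φ

/-- The convolution `(T ∗ φ_t)(x) = T (y ↦ φ_t(x - y))` of a distribution `T` with the
dilated test function `φ_t`. -/
def sconv (d : ℕ) (T : SchwartzMap (Fin d → ℝ) ℂ → ℂ) (φ : SchwartzMap (Fin d → ℝ) ℂ)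
    (t : ℝ) (x : Fin d → ℝ) : ℂ :=
  T (shiftDilate d φ x t)

/-- The local maximal function `M_loc(T)(x) = sup_{0 < t ≤ 1} |(T ∗ φ_t)(x)|`. -/
def sMloc (d : ℕ) (φ : SchwartzMap (Fin d → ℝ) ℂ) (T : SchwartzMap (Fin d → ℝ) ℂ → ℂ)
    (x : Fin d → ℝ) : ℝ≥0∞ :=
  ⨆ t : {t : ℝ // 0 < t ∧ t ≤ 1}, (‖sconv d T φ (t : ℝ) x‖₊ : ℝ≥0∞)

/-- The (global) maximal function `M(T)(x) = sup_{t > 0} |(T ∗ φ_t)(x)|`. -/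
def sMglob (d : ℕ) (φ : SchwartzMap (Fin d → ℝ) ℂ) (T : SchwartzMap (Fin d → ℝ) ℂ → ℂ)
    (x : Fin d → ℝ) : ℝ≥0∞ :=
  ⨆ t : {t : ℝ // 0 < t}, (‖sconv d T φ (t : ℝ) x‖₊ : ℝ≥0∞)

/-- The local Hardy-amalgam quasi-norm `‖T‖_{𝓗_loc^{(q,p)}} = ‖M_loc T‖_{q,p}`. -/
def hlocNorm (d : ℕ) (q p : ℝ≥0∞) (φ : SchwartzMap (Fin d → ℝ) ℂ)
    (T : SchwartzMap (Fin d → ℝ) ℂ → ℂ) : ℝ≥0∞ :=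
  amalgamNormE d q p (sMloc d φ T)

/-- The Hardy-amalgam quasi-norm `‖T‖_{𝓗^{(q,p)}} = ‖M T‖_{q,p}`. -/
def hNorm (d : ℕ) (q p : ℝ≥0∞) (φ : SchwartzMap (Fin d → ℝ) ℂ)
    (T : SchwartzMap (Fin d → ℝ) ℂ → ℂ) : ℝ≥0∞ :=
  amalgamNormE d q p (sMglob d φ T)

/-- The distribution induced by a function `g`, via the pairing `θ ↦ ∫ g θ`. -/
def pairD (d : ℕ) (g : (Fin d → ℝ) → ℂ) : SchwartzMap (Fin d → ℝ) ℂ → ℂ :=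
  fun θ => ∫ x, g x * θ x

/-- The norm `𝔑_N(ψ) = ∫ (1+|x|)^N ∑_{|α| ≤ N+1} |∂^α ψ(x)| dx`, encoded via iterated
Fréchet derivatives. -/
def frakN (d N : ℕ) (ψ : (Fin d → ℝ) → ℂ) : ℝ :=
  ∫ x : Fin d → ℝ, (1 + ‖x‖) ^ N * ∑ i ∈ Finset.range (N + 2), ‖iteratedFDeriv ℝ i ψ x‖

/-- The nontangential grand maximal function
`M_{𝓕_N}(T)(x) = sup_{ψ ∈ 𝓕_N} sup_{t > 0} sup_{|x-y| ≤ t} |(T ∗ ψ_t)(y)|`. -/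
def grandMaxNT (d N : ℕ) (T : SchwartzMap (Fin d → ℝ) ℂ → ℂ) (x : Fin d → ℝ) : ℝ≥0∞ :=
  ⨆ (ψ : {ψ : SchwartzMap (Fin d → ℝ) ℂ // frakN d N ⇑ψ ≤ 1}) (t : {t : ℝ // 0 < t})
    (y : {y : Fin d → ℝ // ‖x - y‖ ≤ (t : ℝ)}),
      (‖sconv d T (ψ : SchwartzMap (Fin d → ℝ) ℂ) (t : ℝ) (y : Fin d → ℝ)‖₊ : ℝ≥0∞)

/-- The local radial grand maximal function
`M_loc^0(T)(x) = sup_{ψ ∈ 𝓕_N} sup_{0 < t ≤ 1} |(T ∗ ψ_t)(x)|`. -/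
def grandMaxLoc (d N : ℕ) (T : SchwartzMap (Fin d → ℝ) ℂ → ℂ) (x : Fin d → ℝ) : ℝ≥0∞ :=
  ⨆ (ψ : {ψ : SchwartzMap (Fin d → ℝ) ℂ // frakN d N ⇑ψ ≤ 1})
    (t : {t : ℝ // 0 < t ∧ t ≤ 1}),
      (‖sconv d T (ψ : SchwartzMap (Fin d → ℝ) ℂ) (t : ℝ) x‖₊ : ℝ≥0∞)

/-!
If `𝔑_N(ψ) ≤ 1`, then `|(f ∗ ψ)(x)|` is bounded by `M_{𝓕_N}(f)(y)` for every `y` with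
`|x - y| ≤ 1`, in particular for every `y` in the unit cube containing `x`. Such a pointwise
lower bound on a cube of volume one passes to its `L^q` norm and then to the amalgam
quasi-norm, giving the estimate with `C = 1` for normalized `ψ`. A general `Φ` is handled by
applying this to `c⁻¹ Φ` for every `c > 𝔑_N(Φ)` and letting `c ↓ 𝔑_N(Φ)`, which needs the
amalgam quasi-norm to be finite.
-/

open Topology

section Amalgam

variable {d : ℕ}

lemma unitCube_eq_pi (k : Fin d → ℤ) :
    unitCube d k = Set.pi univ fun i => Ico (k i : ℝ) (k i + 1) := by
  ext y
  simp [unitCube, Set.mem_pi, mem_Ico]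

lemma measurableSet_unitCube (k : Fin d → ℤ) : MeasurableSet (unitCube d k) := by
  rw [unitCube_eq_pi]
  exact MeasurableSet.univ_pi fun _ => measurableSet_Ico

lemma volume_unitCube (k : Fin d → ℤ) : volume (unitCube d k) = 1 := by
  simp [unitCube_eq_pi, volume_pi_pi, Real.volume_Ico]

lemma mem_unitCube_floor (x : Fin d → ℝ) : x ∈ unitCube d fun i => ⌊x i⌋ :=
  fun _ => ⟨Int.floor_le _, Int.lt_floor_add_one _⟩

lemma norm_sub_le_one_of_mem_unitCube {k : Fin d → ℤ} {x y : Fin d → ℝ}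
    (hx : x ∈ unitCube d k) (hy : y ∈ unitCube d k) : ‖x - y‖ ≤ 1 := by
  refine (pi_norm_le_iff_of_nonneg zero_le_one).2 fun i => ?_
  rw [Pi.sub_apply, Real.norm_eq_abs, abs_le]
  constructor <;> linarith [hx i, hy i]

lemma le_ellNorm {p : ℝ≥0∞} (hp : p ≠ 0) (a : (Fin d → ℤ) → ℝ≥0∞) (k : Fin d → ℤ) :
    a k ≤ ellNorm d p a := by
  rw [ellNorm]
  split_ifs with hp_top
  · exact le_iSup a k
  have hpr : 0 < p.toReal := ENNReal.toReal_pos hp hp_top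
  calc a k = (a k ^ p.toReal) ^ (1 / p.toReal) := by
        rw [← ENNReal.rpow_mul, mul_one_div_cancel hpr.ne', ENNReal.rpow_one]
    _ ≤ (∑' k, a k ^ p.toReal) ^ (1 / p.toReal) :=
        ENNReal.rpow_le_rpow (ENNReal.le_tsum k) (by positivity)

lemma le_setLqNorm_of_forall_le {q : ℝ≥0∞} (hq : q ≠ 0) {g : (Fin d → ℝ) → ℝ≥0∞}
    {s : Set (Fin d → ℝ)} (hs : MeasurableSet s) (hvol : volume s = 1) {a : ℝ≥0∞}
    (h : ∀ y ∈ s, a ≤ g y) : a ≤ setLqNorm q g s := by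
  rw [setLqNorm]
  split_ifs with hq_top
  · have hμ : volume.restrict s ≠ 0 := by
      rw [Ne, Measure.restrict_eq_zero, hvol]
      exact one_ne_zero
    calc a = essSup (fun _ => a) (volume.restrict s) := (essSup_const a hμ).symm
      _ ≤ essSup g (volume.restrict s) :=
        essSup_mono_ae ((ae_restrict_iff' hs).2 (Eventually.of_forall h))
  have hqr : 0 < q.toReal := ENNReal.toReal_pos hq hq_top
  have hint : a ^ q.toReal ≤ ∫⁻ x in s, g x ^ q.toReal := by
    calc a ^ q.toReal = ∫⁻ _ in s, a ^ q.toReal := by rw [setLIntegral_const, hvol, mul_one]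
      _ ≤ ∫⁻ x in s, g x ^ q.toReal :=
        setLIntegral_mono' hs fun y hy => ENNReal.rpow_le_rpow (h y hy) hqr.le
  calc a = (a ^ q.toReal) ^ (1 / q.toReal) := by
        rw [← ENNReal.rpow_mul, mul_one_div_cancel hqr.ne', ENNReal.rpow_one]
    _ ≤ _ := ENNReal.rpow_le_rpow hint (by positivity)

lemma le_amalgamNormE_of_forall_le {q p : ℝ≥0∞} (hq : q ≠ 0) (hp : p ≠ 0)
    {g : (Fin d → ℝ) → ℝ≥0∞} {a : ℝ≥0∞} {k : Fin d → ℤ} (h : ∀ y ∈ unitCube d k, a ≤ g y) :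
    a ≤ amalgamNormE d q p g :=
  (le_setLqNorm_of_forall_le hq (measurableSet_unitCube k) (volume_unitCube k) h).trans
    (le_ellNorm hp (fun k => setLqNorm q g (unitCube d k)) k)

end Amalgam

section GrandMaximal

variable {d N : ℕ}

lemma frakN_nonneg (ψ : (Fin d → ℝ) → ℂ) : 0 ≤ frakN d N ψ :=
  integral_nonneg fun _ => by positivity

lemma frakN_smul (c : ℝ) (Φ : SchwartzMap (Fin d → ℝ) ℂ) :
    frakN d N ⇑(c • Φ) = |c| * frakN d N ⇑Φ := by
  have hderiv : ∀ i x, ‖iteratedFDeriv ℝ i ⇑(c • Φ) x‖ = |c| * ‖iteratedFDeriv ℝ i ⇑Φ x‖ :=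
    fun i x => by
      rw [FunLike.coe_smul, iteratedFDeriv_const_smul_apply (Φ.smooth _).contDiffAt,
        norm_smul, Real.norm_eq_abs]
  simp only [frakN, hderiv, ← Finset.mul_sum, ← integral_const_mul]
  congr 1 with x
  ring

lemma shiftDilate_smul (c : ℝ) (Φ : SchwartzMap (Fin d → ℝ) ℂ) (x : Fin d → ℝ) (t : ℝ) :
    shiftDilate d (c • Φ) x t = c • shiftDilate d Φ x t := by
  unfold shiftDilate
  split_ifs
  · rw [smul_zero]
  · rw [map_smul, smul_comm]

lemma sconv_smul (T : SchwartzMap (Fin d → ℝ) ℂ →L[ℂ] ℂ) (c : ℝ)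
    (Φ : SchwartzMap (Fin d → ℝ) ℂ) (t : ℝ) (x : Fin d → ℝ) :
    sconv d ⇑T (c • Φ) t x = c • sconv d ⇑T Φ t x := by
  rw [sconv, sconv, shiftDilate_smul, T.map_smul_of_tower]

lemma nnnorm_sconv_le_grandMaxNT (T : SchwartzMap (Fin d → ℝ) ℂ → ℂ)
    {ψ : SchwartzMap (Fin d → ℝ) ℂ} (hψ : frakN d N ⇑ψ ≤ 1) {t : ℝ} (ht : 0 < t)
    {x y : Fin d → ℝ} (hxy : ‖y - x‖ ≤ t) :
    (‖sconv d T ψ t x‖₊ : ℝ≥0∞) ≤ grandMaxNT d N T y :=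
  le_iSup_of_le (⟨ψ, hψ⟩ : {ψ : SchwartzMap (Fin d → ℝ) ℂ // frakN d N ⇑ψ ≤ 1}) <|
    le_iSup_of_le (⟨t, ht⟩ : {t : ℝ // 0 < t}) <|
      le_iSup_of_le (⟨x, hxy⟩ : {z : Fin d → ℝ // ‖y - z‖ ≤ t}) le_rfl

lemma nnnorm_sconv_le_amalgamNormE_grandMaxNT {q p : ℝ≥0∞} (hq : q ≠ 0) (hp : p ≠ 0)
    (T : SchwartzMap (Fin d → ℝ) ℂ → ℂ) {ψ : SchwartzMap (Fin d → ℝ) ℂ}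
    (hψ : frakN d N ⇑ψ ≤ 1) (x : Fin d → ℝ) :
    (‖sconv d T ψ 1 x‖₊ : ℝ≥0∞) ≤ amalgamNormE d q p (grandMaxNT d N T) :=
  le_amalgamNormE_of_forall_le hq hp fun _ hy => nnnorm_sconv_le_grandMaxNT T hψ one_pos
    (norm_sub_le_one_of_mem_unitCube hy (mem_unitCube_floor x))

lemma nnnorm_sconv_le_of_frakN_le {q p : ℝ≥0∞} (hq : q ≠ 0) (hp : p ≠ 0)
    (T : SchwartzMap (Fin d → ℝ) ℂ →L[ℂ] ℂ) {Φ : SchwartzMap (Fin d → ℝ) ℂ} {c : ℝ}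
    (hc : 0 < c) (hΦ : frakN d N ⇑Φ ≤ c) (x : Fin d → ℝ) :
    (‖sconv d ⇑T Φ 1 x‖₊ : ℝ≥0∞) ≤
      ENNReal.ofReal c * amalgamNormE d q p (grandMaxNT d N ⇑T) := by
  have hψ : frakN d N ⇑(c⁻¹ • Φ) ≤ 1 := by
    rw [frakN_smul, abs_of_pos (inv_pos.2 hc), inv_mul_le_one₀ hc]
    exact hΦ
  have hΦψ : sconv d ⇑T Φ 1 x = c • sconv d ⇑T (c⁻¹ • Φ) 1 x := by
    rw [sconv_smul, smul_smul, mul_inv_cancel₀ hc.ne', one_smul]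
  rw [hΦψ, nnnorm_smul, ENNReal.coe_mul, ← enorm_eq_nnnorm, Real.enorm_eq_ofReal hc.le]
  gcongr
  exact nnnorm_sconv_le_amalgamNormE_grandMaxNT hq hp T hψ x

end GrandMaximal

theorem stmt10_general (d N : ℕ) (q p : ℝ≥0∞) (hq0 : 0 < q) (hp0 : 0 < p) :
    ∃ C : ℝ, 0 < C ∧ ∀ T : SchwartzMap (Fin d → ℝ) ℂ →L[ℂ] ℂ,
      amalgamNormE d q p (grandMaxNT d N ⇑T) ≠ ∞ →
      ∀ (Φ : SchwartzMap (Fin d → ℝ) ℂ) (x : Fin d → ℝ),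
        (‖sconv d ⇑T Φ 1 x‖₊ : ℝ≥0∞) ≤
          ENNReal.ofReal (C * frakN d N ⇑Φ) * amalgamNormE d q p (grandMaxNT d N ⇑T) := by
  refine ⟨1, one_pos, fun T hT Φ x => ?_⟩
  rw [one_mul]
  have hlim : Tendsto (fun c => ENNReal.ofReal c * amalgamNormE d q p (grandMaxNT d N ⇑T))
      (𝓝[>] frakN d N ⇑Φ)
      (𝓝 (ENNReal.ofReal (frakN d N ⇑Φ) * amalgamNormE d q p (grandMaxNT d N ⇑T))) :=
    ENNReal.Tendsto.mul_const
      ((ENNReal.continuous_ofReal.tendsto _).mono_left nhdsWithin_le_nhds) (Or.inr hT)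
  refine ge_of_tendsto hlim (eventually_nhdsWithin_of_forall fun c hc => ?_)
  exact nnnorm_sconv_le_of_frakN_le hq0.ne' hp0.ne' T
    ((frakN_nonneg _).trans_lt hc) hc.le x

/-- If `f` is a tempered distribution on `ℝ^d` whose nontangential
grand maximal function `M_{𝓕_N}(f)` belongs to `(L^q, ℓ^p)` (`0 < q, p < ∞`), then `f`
is a bounded distribution: for every Schwartz `Φ`, the function `f ∗ Φ` is bounded with
`sup_x |(f ∗ Φ)(x)| ≤ C(d,q,p) 𝔑_N(Φ) ‖M_{𝓕_N}(f)‖_{q,p}`. -/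
theorem stmt10 (d N : ℕ) (q p : ℝ≥0∞) (hq0 : 0 < q) (hq : q ≠ ∞) (hp0 : 0 < p)
    (hp : p ≠ ∞) :
    ∃ C : ℝ, 0 < C ∧ ∀ T : SchwartzMap (Fin d → ℝ) ℂ →L[ℂ] ℂ,
      amalgamNormE d q p (grandMaxNT d N ⇑T) ≠ ∞ →
      ∀ (Φ : SchwartzMap (Fin d → ℝ) ℂ) (x : Fin d → ℝ),
        (‖sconv d ⇑T Φ 1 x‖₊ : ℝ≥0∞) ≤
          ENNReal.ofReal (C * frakN d N ⇑Φ) * amalgamNormE d q p (grandMaxNT d N ⇑T) :=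
  stmt10_general d N q p hq0 hp0

end
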